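/- D(X), the set of zero-divisors of C(X) together with 0, is closed in C(X) with the topology of uniform convergence if and only if X is a weakly P-space. -/

import Mathlib

open TopologicalSpace
open scoped ENNReal NNReal

variable {X : Type*}

/-- The (possibly infinite) sup-distance between two continuous functions. -/
noncomputable def supDist [TopologicalSpace X] (f g : C(X, ℝ)) : ℝ≥0∞ :=
  ⨆ x, (‖f x - g x‖₊ : ℝ≥0∞)

/-- Basic set for the `U^I`-topology. -/
def UIball [TopologicalSpace X] (I : Ideal C(X, ℝ)) (f : C(X, ℝ)) (ε : ℝ) :
    Set C(X, ℝ) :=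
  {g | supDist f g < ENNReal.ofReal ε ∧ f - g ∈ I}

/-- The `U^I`-topology on `C(X, ℝ)`. -/
def UItop [TopologicalSpace X] (I : Ideal C(X, ℝ)) : TopologicalSpace C(X, ℝ) :=
  generateFrom {S | ∃ f ε, 0 < ε ∧ S = UIball I f ε}

/-- Basic set for the `m^I`-topology. -/
def mIball [TopologicalSpace X] (I : Ideal C(X, ℝ)) (f u : C(X, ℝ)) :
    Set C(X, ℝ) :=
  {g | (∀ x, |f x - g x| < u x) ∧ f - g ∈ I}

/-- The `m^I`-topology on `C(X, ℝ)`. -/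
def mItop [TopologicalSpace X] (I : Ideal C(X, ℝ)) : TopologicalSpace C(X, ℝ) :=
  generateFrom {S | ∃ f u, (∀ x, 0 < u x) ∧ S = mIball I f u}

/-- The topology of uniform convergence (`U`-topology) on `C(X, ℝ)`. -/
def Utop [TopologicalSpace X] : TopologicalSpace C(X, ℝ) :=
  generateFrom {S | ∃ (f : C(X, ℝ)) (ε : ℝ), 0 < ε ∧
    S = {g | supDist f g < ENNReal.ofReal ε}}

/-- The `m`-topology on `C(X, ℝ)`. -/
def mtop [TopologicalSpace X] : TopologicalSpace C(X, ℝ) :=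
  generateFrom {S | ∃ (f u : C(X, ℝ)), (∀ x, 0 < u x) ∧
    S = {g | ∀ x, |f x - g x| < u x}}

/-- The bounded continuous functions `C*(X)` as a subset of `C(X, ℝ)`. -/
def Cstar [TopologicalSpace X] : Set C(X, ℝ) :=
  {f | ∃ M : ℝ, ∀ x, |f x| ≤ M}

def Uball [TopologicalSpace X] (f : C(X, ℝ)) (ε : ℝ) : Set C(X, ℝ) :=
  {g | supDist f g < ENNReal.ofReal ε}

lemma supDist_self [TopologicalSpace X] (f : C(X, ℝ)) : supDist f f = 0 := by
  simp [supDist]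

lemma le_supDist [TopologicalSpace X] (f g : C(X, ℝ)) (x : X) :
    (‖f x - g x‖₊ : ℝ≥0∞) ≤ supDist f g := by
  exact le_iSup (fun x => (‖f x - g x‖₊ : ℝ≥0∞)) x

lemma supDist_triangle [TopologicalSpace X] (f g h : C(X, ℝ)) :
    supDist f h ≤ supDist f g + supDist g h := by
  refine iSup_le fun x => ?_
  calc (‖f x - h x‖₊ : ℝ≥0∞) ≤ (‖f x - g x‖₊ : ℝ≥0∞) + ‖g x - h x‖₊ := by
        rw [← ENNReal.coe_add, ENNReal.coe_le_coe, ← sub_add_sub_cancel (f x) (g x) (h x)]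
        exact nnnorm_add_le _ _
      _ ≤ supDist f g + supDist g h :=
        add_le_add (le_supDist f g x) (le_supDist g h x)

lemma mem_Uball_iff [TopologicalSpace X] {f g : C(X, ℝ)} {ε : ℝ} :
    g ∈ Uball f ε ↔ supDist f g < ENNReal.ofReal ε := Iff.rfl

lemma dist_lt_of_mem [TopologicalSpace X] {f g : C(X, ℝ)} {ε : ℝ} (hε : 0 < ε)
    (h : g ∈ Uball f ε) (x : X) : |f x - g x| < ε := by
  have := (le_supDist f g x).trans_lt h
  rw [← enorm_eq_nnnorm, ← ofReal_norm, ENNReal.ofReal_lt_ofReal_iff hε] at this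
  simpa [Real.norm_eq_abs] using this

lemma mem_Uball_of [TopologicalSpace X] {f g : C(X, ℝ)} {ε δ : ℝ} (hδε : δ < ε)
    (hε : 0 < ε) (h : ∀ x, |f x - g x| ≤ δ) : g ∈ Uball f ε := by
  have : supDist f g ≤ ENNReal.ofReal δ := by
    unfold supDist
    refine iSup_le fun x => ?_
    rw [← enorm_eq_nnnorm, ← ofReal_norm]
    exact ENNReal.ofReal_le_ofReal (by simpa [Real.norm_eq_abs] using h x)
  exact this.trans_lt (by rwa [ENNReal.ofReal_lt_ofReal_iff hε])

lemma utop_basic [TopologicalSpace X] (f : C(X, ℝ)) {ε : ℝ} (hε : 0 < ε) :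
    @IsOpen C(X, ℝ) Utop (Uball f ε) :=
  TopologicalSpace.GenerateOpen.basic _ ⟨f, ε, hε, rfl⟩

lemma utop_open_of [TopologicalSpace X] {U : Set C(X, ℝ)}
    (h : ∀ f ∈ U, ∃ ε > (0:ℝ), Uball f ε ⊆ U) : @IsOpen C(X, ℝ) Utop U := by
  choose! ε hε hsub using h
  have : U = ⋃₀ {S | ∃ f ∈ U, S = Uball f (ε f)} := by
    ext g
    constructor
    · intro hg
      exact ⟨Uball g (ε g), ⟨g, hg, rfl⟩, by
        simp [mem_Uball_iff, supDist_self, ENNReal.ofReal_pos.2 (hε g hg)]⟩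
    · rintro ⟨S, ⟨f, hf, rfl⟩, hg⟩
      exact hsub f hf hg
  rw [this]
  exact TopologicalSpace.GenerateOpen.sUnion _ (by rintro S ⟨f, hf, rfl⟩; exact utop_basic f (hε f hf))

lemma utop_exists_ball [TopologicalSpace X] {U : Set C(X, ℝ)} (h : @IsOpen C(X, ℝ) Utop U) :
    ∀ f ∈ U, ∃ ε > (0:ℝ), Uball f ε ⊆ U := by
  induction h with
  | basic S hS =>
    obtain ⟨f0, ε0, hε0, rfl⟩ := hS
    intro f hf
    have hf' : supDist f0 f < ENNReal.ofReal ε0 := hf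
    have hfin : supDist f0 f ≠ ⊤ := (hf'.trans ENNReal.ofReal_lt_top).ne
    set d : ℝ := (supDist f0 f).toReal with hd
    have hd0 : 0 ≤ d := ENNReal.toReal_nonneg
    have hdlt : d < ε0 := by
      rw [hd, ← ENNReal.ofReal_lt_ofReal_iff_of_nonneg ENNReal.toReal_nonneg,
        ENNReal.ofReal_toReal hfin]
      exact hf'
    refine ⟨ε0 - d, sub_pos.2 hdlt, fun g hg => ?_⟩
    have hg' : supDist f g < ENNReal.ofReal (ε0 - d) := hg
    show supDist f0 g < ENNReal.ofReal ε0
    calc supDist f0 g ≤ supDist f0 f + supDist f g := supDist_triangle _ _ _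
      _ < supDist f0 f + ENNReal.ofReal (ε0 - d) := by
          exact ENNReal.add_lt_add_left hfin hg'
      _ ≤ ENNReal.ofReal d + ENNReal.ofReal (ε0 - d) := by
          exact add_le_add_left (by rw [hd, ENNReal.ofReal_toReal hfin] : supDist f0 f ≤ ENNReal.ofReal d) _
      _ = ENNReal.ofReal ε0 := by
          rw [← ENNReal.ofReal_add hd0 (sub_nonneg.2 hdlt.le)]; ring_nf
  | univ => exact fun f _ => ⟨1, one_pos, fun _ _ => trivial⟩
  | inter U V hU hV ihU ihV =>
    intro f hf
    obtain ⟨ε1, hε1, h1⟩ := ihU f hf.1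
    obtain ⟨ε2, hε2, h2⟩ := ihV f hf.2
    refine ⟨min ε1 ε2, lt_min hε1 hε2, fun g hg => ?_⟩
    have hg' : supDist f g < ENNReal.ofReal (min ε1 ε2) := hg
    constructor
    · exact h1 (hg'.trans_le (ENNReal.ofReal_le_ofReal (min_le_left _ _)))
    · exact h2 (hg'.trans_le (ENNReal.ofReal_le_ofReal (min_le_right _ _)))
  | sUnion 𝒮 _ ih =>
    intro f hf
    obtain ⟨S, hS, hfS⟩ := hf
    obtain ⟨ε, hε, hsub⟩ := ih S hS f hfS
    exact ⟨ε, hε, hsub.trans (Set.subset_sUnion_of_mem hS)⟩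


theorem stmt14 [TopologicalSpace X] [T2Space X] [CompletelyRegularSpace X] :
    @IsClosed C(X, ℝ) Utop {f : C(X, ℝ) | (interior (f ⁻¹' {0})).Nonempty} ↔
      (∀ f : C(X, ℝ), (∀ ε : ℝ, 0 < ε → ∃ x, |f x| < ε) →
        (interior (f ⁻¹' {0})).Nonempty) := by
  constructor
  · intro hcl f hf
    by_contra hni
    have hop : @IsOpen C(X, ℝ) Utop {f : C(X, ℝ) | (interior (f ⁻¹' {0})).Nonempty}ᶜ :=
      hcl.isOpen_compl
    obtain ⟨ε, hε, hsub⟩ := utop_exists_ball hop f hni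
    have hε2 : (0:ℝ) < ε / 2 := half_pos hε
    let h : C(X, ℝ) := ⟨fun x => max (-(ε/2)) (min (f x) (ε/2)),
      continuous_const.max (f.continuous.min continuous_const)⟩
    let g : C(X, ℝ) := f - h
    have hgball : g ∈ Uball f ε := by
      refine mem_Uball_of (half_lt_self hε) hε fun x => ?_
      have : f x - g x = h x := by simp [g]
      rw [this]
      have hle : -(ε/2) ≤ h x := le_max_left _ _
      have hge : h x ≤ ε/2 := max_le (by linarith) (min_le_right _ _)
      exact abs_le.2 ⟨hle, hge⟩
    have hgD : (interior (g ⁻¹' {0})).Nonempty := by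
      obtain ⟨x0, hx0⟩ := hf (ε/2) hε2
      have hV : IsOpen {x | |f x| < ε/2} := isOpen_lt f.continuous.abs continuous_const
      have hVsub : {x | |f x| < ε/2} ⊆ g ⁻¹' {0} := by
        intro x hx
        obtain ⟨h2, h1⟩ := abs_lt.1 (show |f x| < ε/2 from hx)
        have : h x = f x := by
          show max (-(ε/2)) (min (f x) (ε/2)) = f x
          rw [min_eq_left h1.le, max_eq_right h2.le]
        simp [g, this]
      exact ⟨x0, hV.subset_interior_iff.2 hVsub hx0⟩
    exact hsub hgball hgD
  · intro hwp
    refine @IsClosed.mk C(X, ℝ) Utop _ (utop_open_of fun f hf => ?_)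
    obtain ⟨ε, hε, hb⟩ : ∃ ε > (0:ℝ), ∀ x, ε ≤ |f x| := by
      by_contra hc
      push_neg at hc
      exact hf (hwp f fun ε hε => hc ε hε)
    refine ⟨ε, hε, fun g hg hcont => ?_⟩
    obtain ⟨x, hx⟩ := hcont
    have hx0 : g x = 0 := by simpa using interior_subset hx
    have hlt := dist_lt_of_mem hε hg x
    rw [hx0, sub_zero] at hlt
    exact absurd hlt (not_lt.2 (hb x))
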